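/- arXiv:1810.01931 — 2 statements merged into one kernel-verified Lean document; each statement's English description precedes it below -/
import Mathlib

section
/- Let m₀ > 0 and let ℓ : ℝⁿ \ {0} → ℝ be smooth, positively homogeneous of degree m₀, with ℓ ≥ c₀ |ξ|^{m₀}, c₀ > 0. Let η ∈ C_c^∞(ℝ) with supp η ⊂ (0,∞). For t > 0 define g_t(x,ξ) := η(t ℓ(ξ)) (for ξ ≠ 0, extended by 0 to ξ = 0). Then g_t is smooth on ℝⁿ, compactly supported in ξ, and for every m' ∈ ℝ and N ∈ ℕ₀ there is C (independent of t ∈ (0,1)) with sup_{|α| ≤ N} sup_ξ ⟨ξ⟩^{|α| - m'} |∂_ξ^α g_t(ξ)| ≤ C t^{m'/m₀}. -/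
open scoped Classical

open MeasureTheory

variable {n : ℕ}

/-- Iterated partial derivatives along a list of coordinate directions. -/
noncomputable def mderiv :
    List (Fin n) → (EuclideanSpace ℝ (Fin n) → ℂ) → EuclideanSpace ℝ (Fin n) → ℂ
  | [], f => f
  | i :: l, f => fun x => fderiv ℝ (mderiv l f) x (EuclideanSpace.single i 1)

lemma mderiv_contDiff {f : EuclideanSpace ℝ (Fin n) → ℂ} (hf : ContDiff ℝ (⊤ : ℕ∞) f) :
    ∀ l : List (Fin n), ContDiff ℝ (⊤ : ℕ∞) (mderiv l f)
  | [] => hf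
  | i :: l => by
    have h := mderiv_contDiff hf l
    exact (h.fderiv_right (by simp)).clm_apply contDiff_const

lemma mderiv_eq_iteratedFDeriv {f : EuclideanSpace ℝ (Fin n) → ℂ} (hf : ContDiff ℝ (⊤ : ℕ∞) f) :
    ∀ (l : List (Fin n)) (x : EuclideanSpace ℝ (Fin n)),
      mderiv l f x = iteratedFDeriv ℝ l.length f x
        (fun j => EuclideanSpace.single (l.get j) 1)
  | [], x => by simp [mderiv, iteratedFDeriv_zero_apply]
  | i :: l, x => by
    have hIH := mderiv_eq_iteratedFDeriv hf l
    show fderiv ℝ (mderiv l f) x (EuclideanSpace.single i 1) = _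
    have h1 : mderiv l f = fun y => iteratedFDeriv ℝ l.length f y
        (fun j => EuclideanSpace.single (l.get j) 1) := funext fun y => hIH y
    rw [h1]
    have hdiff : DifferentiableAt ℝ (iteratedFDeriv ℝ l.length f) x :=
      ((hf.iteratedFDeriv_right (m := (⊤ : ℕ∞)) (by exact_mod_cast le_top)).differentiable (by simp)).differentiableAt
    rw [fderiv_continuousMultilinear_apply_const_apply hdiff]
    simp only [List.length_cons]
    rw [iteratedFDeriv_succ_apply_left]
    rfl

lemma mderiv_zero_on_open {f : EuclideanSpace ℝ (Fin n) → ℂ} {U : Set (EuclideanSpace ℝ (Fin n))}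
    (hU : IsOpen U) (h0 : ∀ x ∈ U, f x = 0) :
    ∀ (l : List (Fin n)) (x : EuclideanSpace ℝ (Fin n)), x ∈ U → mderiv l f x = 0
  | [], x, hx => h0 x hx
  | i :: l, x, hx => by
    have hIH := mderiv_zero_on_open hU h0 l
    show fderiv ℝ (mderiv l f) x (EuclideanSpace.single i 1) = 0
    have heq : mderiv l f =ᶠ[nhds x] (fun _ => (0 : ℂ)) :=
      Filter.eventually_of_mem (hU.mem_nhds hx) hIH
    rw [heq.fderiv_eq, fderiv_const_apply]
    rfl

lemma mderiv_comp_smul {G : EuclideanSpace ℝ (Fin n) → ℂ} (hG : ContDiff ℝ (⊤ : ℕ∞) G) (s : ℝ) :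
    ∀ (l : List (Fin n)) (ξ : EuclideanSpace ℝ (Fin n)),
      mderiv l (fun x => G (s • x)) ξ = (s ^ l.length : ℝ) • mderiv l G (s • ξ)
  | [], ξ => by simp [mderiv]
  | i :: l, ξ => by
    have hIH := mderiv_comp_smul hG s l
    show fderiv ℝ (mderiv l (fun x => G (s • x))) ξ (EuclideanSpace.single i 1) = _
    have h1 : mderiv l (fun x => G (s • x))
        = fun x => (s ^ l.length : ℝ) • mderiv l G (s • x) := funext fun x => hIH x
    rw [h1]
    have hGl : ContDiff ℝ (⊤ : ℕ∞) (mderiv l G) := mderiv_contDiff hG l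
    have hsm : ∀ y : EuclideanSpace ℝ (Fin n),
        HasFDerivAt (fun x : EuclideanSpace ℝ (Fin n) => mderiv l G (s • x))
          ((fderiv ℝ (mderiv l G) (s • y)).comp
            (s • ContinuousLinearMap.id ℝ (EuclideanSpace ℝ (Fin n)))) y := fun y =>
      ((hGl.differentiable (by simp) (s • y)).hasFDerivAt).comp y ((hasFDerivAt_id y).const_smul s)
    have h2 : HasFDerivAt (fun x => (s ^ l.length : ℝ) • mderiv l G (s • x))
        ((s ^ l.length : ℝ) • ((fderiv ℝ (mderiv l G) (s • ξ)).comp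
          (s • ContinuousLinearMap.id ℝ (EuclideanSpace ℝ (Fin n))))) ξ := (hsm ξ).fun_const_smul _
    rw [h2.fderiv]
    show (s ^ l.length : ℝ) • (fderiv ℝ (mderiv l G) (s • ξ))
        ((s • ContinuousLinearMap.id ℝ (EuclideanSpace ℝ (Fin n))) (EuclideanSpace.single i 1)) = _
    rw [ContinuousLinearMap.smul_apply, ContinuousLinearMap.id_apply, _root_.map_smul]
    show (s ^ l.length : ℝ) • s • mderiv (i :: l) G (s • ξ) = _
    rw [smul_smul, List.length_cons, pow_succ]


/-- for `η ∈ C_c^∞` supported in `(0,∞)` and `ℓ` homogeneous elliptic of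
degree `m₀ > 0`, the functions `g_t(ξ) = η(t ℓ(ξ))` are smooth, compactly supported, and
satisfy uniform `S^{m'}`-estimates `⟨ξ⟩^{|α|-m'} |∂^α g_t(ξ)| ≤ C t^{m'/m₀}` for
`t ∈ (0,1)`. -/
theorem stmt15 (hn : 1 ≤ n) (m₀ : ℝ) (hm₀ : 0 < m₀) (c₀ : ℝ) (hc₀ : 0 < c₀)
    (ℓ : EuclideanSpace ℝ (Fin n) → ℝ)
    (hℓsm : ContDiffOn ℝ (⊤ : ℕ∞) ℓ {0}ᶜ)
    (hhom : ∀ r : ℝ, 0 < r → ∀ ξ : EuclideanSpace ℝ (Fin n), ξ ≠ 0 →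
      ℓ (r • ξ) = r ^ m₀ * ℓ ξ)
    (hell : ∀ ξ : EuclideanSpace ℝ (Fin n), ξ ≠ 0 → c₀ * ‖ξ‖ ^ m₀ ≤ ℓ ξ)
    (η : ℝ → ℂ) (hηsm : ContDiff ℝ (⊤ : ℕ∞) η) (hηc : HasCompactSupport η)
    (hηsupp : tsupport η ⊆ Set.Ioi 0)
    (g : ℝ → EuclideanSpace ℝ (Fin n) → ℂ)
    (hg : ∀ t : ℝ, ∀ ξ : EuclideanSpace ℝ (Fin n),
      g t ξ = if ξ = 0 then 0 else η (t * ℓ ξ)) :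
    (∀ t : ℝ, 0 < t → ContDiff ℝ (⊤ : ℕ∞) (g t) ∧ HasCompactSupport (g t)) ∧
    ∀ (m' : ℝ) (N : ℕ), ∃ C : ℝ, ∀ t : ℝ, 0 < t → t < 1 →
      ∀ l : List (Fin n), l.length ≤ N → ∀ ξ : EuclideanSpace ℝ (Fin n),
        (1 + ‖ξ‖ ^ 2) ^ (((l.length : ℝ) - m') / 2) * ‖mderiv l (g t) ξ‖
          ≤ C * t ^ (m' / m₀) := by
  -- upper bound for ℓ
  have hℓc : ContinuousOn ℓ {0}ᶜ := hℓsm.continuousOn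
  have hsub : Metric.sphere (0 : EuclideanSpace ℝ (Fin n)) 1 ⊆ ({0} : Set (EuclideanSpace ℝ (Fin n)))ᶜ := by
    intro x hx
    simp only [Set.mem_compl_iff, Set.mem_singleton_iff]
    intro h
    rw [h] at hx
    simp at hx
  obtain ⟨M, hM⟩ : BddAbove (ℓ '' Metric.sphere (0 : EuclideanSpace ℝ (Fin n)) 1) :=
    ((isCompact_sphere 0 1).image_of_continuousOn (hℓc.mono hsub)).bddAbove
  set M' : ℝ := max M 1 with hM'def
  have hM'pos : 0 < M' := lt_of_lt_of_le one_pos (le_max_right _ _)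
  have hupper : ∀ ξ : EuclideanSpace ℝ (Fin n), ξ ≠ 0 → ℓ ξ ≤ M' * ‖ξ‖ ^ m₀ := by
    intro ξ hξ
    have hr : (0:ℝ) < ‖ξ‖ := norm_pos_iff.mpr hξ
    set ω : EuclideanSpace ℝ (Fin n) := ‖ξ‖⁻¹ • ξ with hω
    have hω1 : ω ∈ Metric.sphere (0 : EuclideanSpace ℝ (Fin n)) 1 := by
      simp [hω, norm_smul, abs_of_pos (inv_pos.mpr hr), inv_mul_cancel₀ hr.ne']
    have hω0 : ω ≠ 0 := by
      intro h
      apply hξ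
      have := congrArg (fun y : EuclideanSpace ℝ (Fin n) => ‖ξ‖ • y) h
      simpa [hω, smul_smul, mul_inv_cancel₀ hr.ne'] using this
    have hξω : ξ = ‖ξ‖ • ω := by
      simp [hω, smul_smul, mul_inv_cancel₀ hr.ne']
    have hval : ℓ ξ = ‖ξ‖ ^ m₀ * ℓ ω := by
      conv_lhs => rw [hξω]
      exact hhom ‖ξ‖ hr ω hω0
    have hωM : ℓ ω ≤ M' := le_trans (hM ⟨ω, hω1, rfl⟩) (le_max_left _ _)
    rw [hval, mul_comm M' _]
    exact mul_le_mul_of_nonneg_left hωM (Real.rpow_nonneg hr.le _)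
  -- support bounds for η
  set K : Set ℝ := tsupport η ∪ {1} with hKdef
  have hKc : IsCompact K := hηc.union isCompact_singleton
  have hKne : K.Nonempty := ⟨1, Or.inr rfl⟩
  have hKpos : K ⊆ Set.Ioi 0 := by
    intro x hx
    rcases hx with hx | hx
    · exact hηsupp hx
    · simp only [Set.mem_singleton_iff] at hx; simp [hx]
  set ε₁ : ℝ := sInf K with hε₁def
  set ε₂ : ℝ := sSup K with hε₂def
  have hε₁pos : 0 < ε₁ := hKpos (hKc.sInf_mem hKne)
  have hε₂pos : 0 < ε₂ := hKpos (hKc.sSup_mem hKne)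
  have hη0 : ∀ x : ℝ, x < ε₁ ∨ ε₂ < x → η x = 0 := by
    intro x hx
    by_contra h
    have hxK : x ∈ K := Or.inl (subset_tsupport η h)
    rcases hx with hx | hx
    · exact absurd (csInf_le hKc.bddBelow hxK) (not_le.mpr hx)
    · exact absurd (le_csSup hKc.bddAbove hxK) (not_le.mpr hx)
  -- continuity of ξ ↦ ‖ξ‖ ^ m₀
  have hnc : Continuous fun ξ : EuclideanSpace ℝ (Fin n) => ‖ξ‖ ^ m₀ := by
    rw [continuous_iff_continuousAt]
    intro x
    exact (Real.continuousAt_rpow_const _ _ (Or.inr hm₀.le)).comp continuous_norm.continuousAt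
  have hzr : (0:ℝ) ^ m₀ = 0 := Real.zero_rpow hm₀.ne'
  -- Part 1
  have hpart1 : ∀ t : ℝ, 0 < t → ContDiff ℝ (⊤ : ℕ∞) (g t) ∧ HasCompactSupport (g t) := by
    intro t ht
    constructor
    · -- smoothness
      set U : Set (EuclideanSpace ℝ (Fin n)) := {ξ | t * M' * ‖ξ‖ ^ m₀ < ε₁} with hUdef
      have hUopen : IsOpen U := isOpen_lt (continuous_const.mul hnc) continuous_const
      have hU0 : (0 : EuclideanSpace ℝ (Fin n)) ∈ U := by simp [hUdef, hzr, hε₁pos]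
      have hgU : ∀ ξ ∈ U, g t ξ = 0 := by
        intro ξ hξ
        rw [hg]
        split_ifs with h
        · rfl
        · apply hη0
          left
          calc t * ℓ ξ ≤ t * (M' * ‖ξ‖ ^ m₀) :=
                mul_le_mul_of_nonneg_left (hupper ξ h) ht.le
            _ = t * M' * ‖ξ‖ ^ m₀ := by ring
            _ < ε₁ := hξ
      rw [contDiff_iff_contDiffAt]
      intro x
      by_cases hx : x ∈ U
      · exact contDiffAt_const.congr_of_eventuallyEq
          (Filter.eventuallyEq_of_mem (hUopen.mem_nhds hx) hgU)
      · have hx0 : x ≠ 0 := fun h => hx (h ▸ hU0)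
        have hmem : ({0} : Set (EuclideanSpace ℝ (Fin n)))ᶜ ∈ nhds x := isOpen_compl_singleton.mem_nhds hx0
        have hℓat : ContDiffAt ℝ (⊤ : ℕ∞) ℓ x := hℓsm.contDiffAt hmem
        have hsm : ContDiffAt ℝ (⊤ : ℕ∞) (fun ξ => η (t * ℓ ξ)) x :=
          hηsm.contDiffAt.comp x ((contDiffAt_const (c := t)).mul hℓat)
        apply hsm.congr_of_eventuallyEq
        apply Filter.eventuallyEq_of_mem hmem
        intro ξ hξ
        have hξ' : ξ ≠ 0 := hξ
        rw [hg, if_neg hξ']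
    · -- compact support
      set R : ℝ := (ε₂ / (t * c₀)) ^ (1 / m₀) with hRdef
      have hRpos : 0 < R := Real.rpow_pos_of_pos (div_pos hε₂pos (by positivity)) _
      apply HasCompactSupport.intro (isCompact_closedBall (0:EuclideanSpace ℝ (Fin n)) R)
      intro ξ hξ
      simp only [Metric.mem_closedBall, dist_zero_right, not_le] at hξ
      have hξ0 : ξ ≠ 0 := by
        intro h; rw [h] at hξ; simp at hξ; linarith
      rw [hg, if_neg hξ0]
      apply hη0
      right
      have hRm : R ^ m₀ = ε₂ / (t * c₀) := by
        rw [hRdef, ← Real.rpow_mul (div_nonneg hε₂pos.le (by positivity)),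
          one_div, inv_mul_cancel₀ hm₀.ne', Real.rpow_one]
      have h1 : R ^ m₀ < ‖ξ‖ ^ m₀ := Real.rpow_lt_rpow hRpos.le hξ hm₀
      have h2 : ε₂ / t < c₀ * ‖ξ‖ ^ m₀ := by
        calc ε₂ / t = c₀ * (ε₂ / (t * c₀)) := by field_simp
          _ = c₀ * R ^ m₀ := by rw [hRm]
          _ < c₀ * ‖ξ‖ ^ m₀ := mul_lt_mul_of_pos_left h1 hc₀
      calc ε₂ = t * (ε₂ / t) := by field_simp
        _ < t * (c₀ * ‖ξ‖ ^ m₀) := mul_lt_mul_of_pos_left h2 ht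
        _ ≤ t * ℓ ξ := mul_le_mul_of_nonneg_left (hell ξ hξ0) ht.le
  refine ⟨hpart1, ?_⟩
  intro m' N
  set G : EuclideanSpace ℝ (Fin n) → ℂ := fun ξ => if ξ = 0 then 0 else η (ℓ ξ) with hGdef
  have hGg1 : g 1 = G := by
    funext ξ; rw [hg]; simp [hGdef]
  have hGsm : ContDiff ℝ (⊤ : ℕ∞) G := hGg1 ▸ (hpart1 1 one_pos).1
  have hGc : HasCompactSupport G := hGg1 ▸ (hpart1 1 one_pos).2
  set a : ℝ := (ε₁ / M') ^ (1/m₀) with hadef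
  set b : ℝ := (ε₂ / c₀) ^ (1/m₀) with hbdef
  have hapos : 0 < a := Real.rpow_pos_of_pos (div_pos hε₁pos hM'pos) _
  have hbpos : 0 < b := Real.rpow_pos_of_pos (div_pos hε₂pos hc₀) _
  have ham : a ^ m₀ = ε₁ / M' := by
    rw [hadef, ← Real.rpow_mul (div_nonneg hε₁pos.le hM'pos.le), one_div,
      inv_mul_cancel₀ hm₀.ne', Real.rpow_one]
  have hbm : b ^ m₀ = ε₂ / c₀ := by
    rw [hbdef, ← Real.rpow_mul (div_nonneg hε₂pos.le hc₀.le), one_div,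
      inv_mul_cancel₀ hm₀.ne', Real.rpow_one]
  set V : Set (EuclideanSpace ℝ (Fin n)) := {ξ | ‖ξ‖ < a} ∪ {ξ | b < ‖ξ‖} with hVdef
  have hVopen : IsOpen V :=
    (isOpen_lt continuous_norm continuous_const).union
      (isOpen_lt continuous_const continuous_norm)
  have hGV : ∀ ξ ∈ V, G ξ = 0 := by
    intro ξ hξ
    rcases hξ with hξ | hξ
    · simp only [hGdef]
      split_ifs with h
      · rfl
      · apply hη0
        left
        have h2 : ‖ξ‖ ^ m₀ < a ^ m₀ := Real.rpow_lt_rpow (norm_nonneg _) hξ hm₀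
        calc ℓ ξ ≤ M' * ‖ξ‖ ^ m₀ := hupper ξ h
          _ < M' * a ^ m₀ := mul_lt_mul_of_pos_left h2 hM'pos
          _ = ε₁ := by rw [ham]; field_simp
    · have hξ0 : ξ ≠ 0 := by
        intro h
        rw [h] at hξ
        simp only [norm_zero, Set.mem_setOf_eq] at hξ
        linarith
      simp only [hGdef]
      rw [if_neg hξ0]
      apply hη0
      right
      have h2 : b ^ m₀ < ‖ξ‖ ^ m₀ := Real.rpow_lt_rpow hbpos.le hξ hm₀
      calc ε₂ = c₀ * b ^ m₀ := by rw [hbm]; field_simp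
        _ < c₀ * ‖ξ‖ ^ m₀ := mul_lt_mul_of_pos_left h2 hc₀
        _ ≤ ℓ ξ := hell ξ hξ0
  have hmdG0 := mderiv_zero_on_open hVopen hGV
  have hBex : ∀ k : ℕ, ∃ Bk : ℝ, 0 ≤ Bk ∧ ∀ x, ‖iteratedFDeriv ℝ k G x‖ ≤ Bk := by
    intro k
    obtain ⟨Bk, hBk⟩ := (hGc.iteratedFDeriv k).exists_bound_of_continuous
      (hGsm.continuous_iteratedFDeriv (by exact_mod_cast le_top))
    exact ⟨max Bk 0, le_max_right _ _, fun x => (hBk x).trans (le_max_left _ _)⟩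
  choose B hB0 hBle using hBex
  set C : ℝ := ∑ k ∈ Finset.range (N+1),
    ((1 + b^2) ^ (((k:ℝ) - m')/2) + a ^ ((k:ℝ) - m')) * B k with hCdef
  have hCterm : ∀ k ∈ Finset.range (N+1),
      0 ≤ ((1 + b^2) ^ (((k:ℝ) - m')/2) + a ^ ((k:ℝ) - m')) * B k := by
    intro k _
    apply mul_nonneg _ (hB0 k)
    have := Real.rpow_nonneg (x := 1 + b^2) (by positivity) (((k:ℝ) - m')/2)
    have := Real.rpow_nonneg hapos.le ((k:ℝ) - m')
    linarith
  have hC0 : 0 ≤ C := Finset.sum_nonneg hCterm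
  refine ⟨C, ?_⟩
  intro t ht0 ht1 l hlN ξ
  set k := l.length with hk
  set s : ℝ := t ^ (1/m₀) with hsdef
  have hs0 : 0 < s := Real.rpow_pos_of_pos ht0 _
  have hs1 : s ≤ 1 := Real.rpow_le_one ht0.le ht1.le (by positivity)
  have hsm₀ : s ^ m₀ = t := by
    rw [hsdef, ← Real.rpow_mul ht0.le, one_div, inv_mul_cancel₀ hm₀.ne', Real.rpow_one]
  have htm' : s ^ m' = t ^ (m' / m₀) := by
    rw [hsdef, ← Real.rpow_mul ht0.le]
    congr 1
    field_simp
  have hgt : g t = fun ξ => G (s • ξ) := by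
    funext ζ
    rw [hg]
    by_cases h : ζ = 0
    · subst h; simp [hGdef]
    · have hsζ : s • ζ ≠ 0 := smul_ne_zero hs0.ne' h
      rw [if_neg h]
      simp only [hGdef]
      rw [if_neg hsζ, hhom s hs0 ζ h, hsm₀]
  have htpos : 0 < t ^ (m' / m₀) := Real.rpow_pos_of_pos ht0 _
  have hmd : mderiv l (g t) ξ = (s ^ k : ℝ) • mderiv l G (s • ξ) := by
    rw [hgt]; exact mderiv_comp_smul hGsm s l ξ
  by_cases hz : mderiv l G (s • ξ) = 0
  · rw [hmd, hz, smul_zero, norm_zero, mul_zero]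
    exact mul_nonneg hC0 htpos.le
  · have hsξV : s • ξ ∉ V := fun h => hz (hmdG0 l _ h)
    rw [hVdef] at hsξV
    have hnsm : ‖s • ξ‖ = s * ‖ξ‖ := by
      rw [norm_smul, Real.norm_eq_abs, abs_of_pos hs0]
    have hann1 : a ≤ s * ‖ξ‖ := by
      by_contra h
      exact hsξV (Or.inl (by rw [Set.mem_setOf_eq] at *; rw [hnsm]; linarith))
    have hann2 : s * ‖ξ‖ ≤ b := by
      by_contra h
      exact hsξV (Or.inr (by rw [Set.mem_setOf_eq] at *; rw [hnsm]; linarith))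
    have hPpos : (0:ℝ) < 1 + ‖ξ‖^2 := by positivity
    have hs2 : (0:ℝ) < s^2 := by positivity
    have hP1 : (1 + ‖ξ‖^2) * s^2 ≤ 1 + b^2 := by
      have h1 : (s * ‖ξ‖)^2 ≤ b^2 := pow_le_pow_left₀ (by positivity) hann2 2
      have h2 : s^2 ≤ 1 := pow_le_one₀ hs0.le hs1
      calc (1 + ‖ξ‖^2) * s^2 = s^2 + (s * ‖ξ‖)^2 := by ring
        _ ≤ 1 + b^2 := add_le_add h2 h1
    have hP2 : a^2 ≤ (1 + ‖ξ‖^2) * s^2 := by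
      have h1 : a^2 ≤ (s * ‖ξ‖)^2 := pow_le_pow_left₀ hapos.le hann1 2
      calc a^2 ≤ (s * ‖ξ‖)^2 := h1
        _ ≤ s^2 + (s * ‖ξ‖)^2 := le_add_of_nonneg_left (sq_nonneg s)
        _ = (1 + ‖ξ‖^2) * s^2 := by ring
    have hs2e : ∀ x : ℝ, 0 < x → (x^2 : ℝ) ^ (((k:ℝ) - m')/2) = x ^ ((k:ℝ) - m') := by
      intro x hx
      rw [← Real.rpow_natCast x 2, ← Real.rpow_mul hx.le]
      congr 1
      push_cast
      ring
    have key1 : (1 + ‖ξ‖^2) ^ (((k:ℝ) - m')/2)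
        ≤ ((1 + b^2) ^ (((k:ℝ) - m')/2) + a ^ ((k:ℝ) - m')) * s ^ (m' - (k:ℝ)) := by
      have hsmk : (s^2 : ℝ) ^ (((k:ℝ) - m')/2) = (s ^ (m' - (k:ℝ)))⁻¹ := by
        rw [hs2e s hs0, ← Real.rpow_neg hs0.le, neg_sub]
      have hsmknn : (0:ℝ) ≤ s ^ (m' - (k:ℝ)) := Real.rpow_nonneg hs0.le _
      rcases le_or_gt 0 (((k:ℝ) - m')/2) with he | he
      · have hle : (1 + ‖ξ‖^2) ≤ (1 + b^2) / s^2 := (le_div_iff₀ hs2).mpr hP1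
        calc (1 + ‖ξ‖^2) ^ (((k:ℝ) - m')/2)
            ≤ ((1 + b^2) / s^2) ^ (((k:ℝ) - m')/2) :=
              Real.rpow_le_rpow hPpos.le hle he
          _ = (1 + b^2) ^ (((k:ℝ) - m')/2) * s ^ (m' - (k:ℝ)) := by
              rw [Real.div_rpow (by positivity) hs2.le, hsmk, div_inv_eq_mul]
          _ ≤ _ := by
              apply mul_le_mul_of_nonneg_right _ hsmknn
              have := Real.rpow_nonneg hapos.le ((k:ℝ) - m')
              linarith
      · have hle : a^2 / s^2 ≤ 1 + ‖ξ‖^2 := (div_le_iff₀ hs2).mpr hP2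
        have hdpos : (0:ℝ) < a^2 / s^2 := by positivity
        calc (1 + ‖ξ‖^2) ^ (((k:ℝ) - m')/2)
            ≤ (a^2 / s^2) ^ (((k:ℝ) - m')/2) :=
              Real.rpow_le_rpow_of_nonpos hdpos hle he.le
          _ = a ^ ((k:ℝ) - m') * s ^ (m' - (k:ℝ)) := by
              rw [Real.div_rpow (by positivity) hs2.le, hs2e a hapos, hsmk, div_inv_eq_mul]
          _ ≤ _ := by
              apply mul_le_mul_of_nonneg_right _ hsmknn
              have := Real.rpow_nonneg (x := 1 + b^2) (by positivity) (((k:ℝ) - m')/2)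
              linarith
    have hmdB : ‖mderiv l G (s • ξ)‖ ≤ B k := by
      rw [mderiv_eq_iteratedFDeriv hGsm]
      have hop := ContinuousMultilinearMap.le_opNorm (iteratedFDeriv ℝ l.length G (s • ξ))
        (fun j => EuclideanSpace.single (l.get j) 1)
      simp only [EuclideanSpace.norm_single, norm_one, Finset.prod_const_one, mul_one] at hop
      exact hop.trans (hBle k _)
    have hnorm : ‖mderiv l (g t) ξ‖ = s ^ k * ‖mderiv l G (s • ξ)‖ := by
      rw [hmd, norm_smul, Real.norm_eq_abs, abs_of_pos (pow_pos hs0 k)]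
    have hsplit : s ^ (m' - (k:ℝ)) * s ^ k = s ^ m' := by
      rw [← Real.rpow_natCast s k, ← Real.rpow_add hs0]
      congr 1
      ring
    have hterm_le : ((1 + b^2) ^ (((k:ℝ) - m')/2) + a ^ ((k:ℝ) - m')) * B k ≤ C :=
      Finset.single_le_sum hCterm (Finset.mem_range.mpr (Nat.lt_succ_of_le hlN))
    calc (1 + ‖ξ‖^2) ^ (((k:ℝ) - m')/2) * ‖mderiv l (g t) ξ‖
        = (1 + ‖ξ‖^2) ^ (((k:ℝ) - m')/2) * (s ^ k * ‖mderiv l G (s • ξ)‖) := by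
          rw [hnorm]
      _ ≤ (((1 + b^2) ^ (((k:ℝ) - m')/2) + a ^ ((k:ℝ) - m')) * s ^ (m' - (k:ℝ)))
            * (s ^ k * B k) := by
          apply mul_le_mul key1 _ (by positivity) _
          · exact mul_le_mul_of_nonneg_left hmdB (pow_pos hs0 k).le
          · have h1 := Real.rpow_nonneg (x := 1 + b^2) (by positivity : (0:ℝ) ≤ 1 + b^2) (((k:ℝ) - m')/2)
            have h2 := Real.rpow_nonneg hapos.le ((k:ℝ) - m')
            have h3 := Real.rpow_nonneg hs0.le (m' - (k:ℝ))
            positivity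
      _ = (((1 + b^2) ^ (((k:ℝ) - m')/2) + a ^ ((k:ℝ) - m')) * B k)
            * (s ^ (m' - (k:ℝ)) * s ^ k) := by ring
      _ = (((1 + b^2) ^ (((k:ℝ) - m')/2) + a ^ ((k:ℝ) - m')) * B k) * s ^ m' := by
          rw [hsplit]
      _ ≤ C * s ^ m' := by
          apply mul_le_mul_of_nonneg_right hterm_le (Real.rpow_nonneg hs0.le _)
      _ = C * t ^ (m' / m₀) := by rw [htm']
end

section
/- Let n ≥ 2, m₀ > 0, and let ℓ : ℝⁿ \ {0} → ℝ be continuous, positively homogeneous of degree m₀ with ℓ ≥ c₀|ξ|^{m₀}, c₀ > 0. Let a : ℝⁿ \ {0} → ℂ be continuous and positively homogeneous of degree -n, and let η : (0,∞) → ℂ be bounded measurable with compact support in (0,∞). Then there exists t₀ > 0 such that for all 0 < t < t₀, ∫_{|ξ| ≥ 1} a(ξ) η(t ℓ(ξ)) dξ = (1/m₀) (∫_{𝕊^{n-1}} a dς) (∫_0^∞ η(u) du/u). In particular the left-hand side is constant in t for small t > 0. -/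
/-!
In polar coordinates `ξ = r • ω`, the homogeneity of `a` and `ℓ` turns the integrand
`r ^ (n - 1) • a ξ * η (t * ℓ ξ)` into `r⁻¹ * a ω * η (t * ℓ ω * r ^ m₀)`, so the radial integral
is the Mellin transform at `0` of `r ↦ η (t * ℓ ω * r ^ m₀)`, which the substitution
`u = t * ℓ ω * r ^ m₀` reduces to `(1 / m₀) * ∫ u in Ioi 0, η u / u`. For small `t`, `t * ℓ` stays
below the support of `η` on the punctured unit ball, so the restriction `1 ≤ ‖ξ‖` may be dropped;
the integrand is then bounded with bounded support, hence integrable.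
-/

open MeasureTheory Set Metric

theorem IsCompact.exists_pos_le_of_subset_Ioi {K : Set ℝ} (hK : IsCompact K)
    (hKpos : K ⊆ Ioi 0) : ∃ δ > 0, ∀ u ∈ K, δ ≤ u := by
  rcases K.eq_empty_or_nonempty with rfl | hne
  · exact ⟨1, one_pos, by simp⟩
  obtain ⟨u₀, hu₀, hmin⟩ := hK.exists_isMinOn hne continuousOn_id
  exact ⟨u₀, hKpos hu₀, fun u hu ↦ hmin hu⟩

theorem pow_pred_mul_rpow_neg_natCast {r : ℝ} (hr : 0 < r) {d : ℕ} (hd : 0 < d) :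
    r ^ (d - 1) * r ^ (-(d : ℝ)) = r⁻¹ := by
  rw [Real.rpow_neg hr.le, Real.rpow_natCast, ← Nat.succ_pred_eq_of_pos hd, pow_succ]
  field_simp
  simp

theorem mellin_comp_mul_rpow_zero {F : Type*} [NormedAddCommGroup F] [NormedSpace ℂ F]
    (g : ℝ → F) {c : ℝ} (hc : 0 < c) (m : ℝ) :
    mellin (fun r ↦ g (c * r ^ m)) 0 = |m|⁻¹ • mellin g 0 := by
  rw [mellin_comp_rpow (fun u ↦ g (c * u)), zero_div, mellin_comp_mul_left _ _ hc, neg_zero,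
    Complex.cpow_zero, one_smul]

theorem mellin_zero_eq_integral_inv_smul {F : Type*} [NormedAddCommGroup F] [NormedSpace ℂ F]
    (g : ℝ → F) : mellin g 0 = ∫ u in Ioi (0 : ℝ), (u : ℂ)⁻¹ • g u := by
  simp [mellin, Complex.cpow_neg_one]

theorem exists_norm_le_of_mul_rpow_norm_le {E : Type*} [NormedAddCommGroup E] {ℓ : E → ℝ}
    {m c : ℝ} (hm : 0 < m) (hc : 0 < c) (hℓ : ∀ ξ : E, ξ ≠ 0 → c * ‖ξ‖ ^ m ≤ ℓ ξ) (R : ℝ) :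
    ∃ B, ∀ ξ : E, ℓ ξ ≤ R → ‖ξ‖ ≤ B := by
  refine ⟨max 0 ((R / c) ^ m⁻¹), fun ξ hξ ↦ ?_⟩
  rcases eq_or_ne ξ 0 with rfl | hξ0
  · simp
  have hpow : ‖ξ‖ ^ m ≤ R / c := by
    rw [le_div_iff₀' hc]
    exact (hℓ ξ hξ0).trans hξ
  calc ‖ξ‖ = (‖ξ‖ ^ m) ^ m⁻¹ := (Real.rpow_rpow_inv (norm_nonneg _) hm.ne').symm
    _ ≤ (R / c) ^ m⁻¹ := by gcongr
    _ ≤ _ := le_max_right _ _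

theorem integrable_of_ae_norm_le_of_support_bounded {E F : Type*} [NormedAddCommGroup E]
    [ProperSpace E] [MeasurableSpace E] [BorelSpace E] [NormedAddCommGroup F]
    (μ : Measure E) [IsFiniteMeasureOnCompacts μ] {f : E → F} (hf : AEStronglyMeasurable f μ)
    {C B : ℝ} (hC : ∀ᵐ x ∂μ, ‖f x‖ ≤ C) (hB : ∀ x, f x ≠ 0 → ‖x‖ ≤ B) : Integrable f μ := by
  refine Integrable.mono' ((integrableOn_const
    (measure_closedBall_lt_top (x := 0) (r := B)).ne).integrable_indicator
    measurableSet_closedBall) hf ?_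
  filter_upwards [hC] with x hx
  by_cases hfx : f x = 0
  · simp only [hfx, norm_zero]
    exact indicator_nonneg (fun _ _ ↦ (norm_nonneg _).trans hx) _
  · rwa [indicator_of_mem (mem_closedBall_zero_iff.mpr (hB x hfx))]

theorem MeasureTheory.Measure.integral_volumeIoiPow {F : Type*} [NormedAddCommGroup F]
    [NormedSpace ℝ F] (n : ℕ) (g : ℝ → F) :
    ∫ r, g r ∂Measure.volumeIoiPow n = ∫ r in Ioi (0 : ℝ), r ^ n • g r := by
  simp only [Measure.volumeIoiPow, ENNReal.ofReal]
  rw [integral_withDensity_eq_integral_smul (measurable_subtype_coe.pow_const _).real_toNNReal,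
    integral_subtype_comap measurableSet_Ioi fun r ↦ (r ^ n).toNNReal • g r]
  refine setIntegral_congr_fun measurableSet_Ioi fun r hr ↦ ?_
  rw [NNReal.smul_def, Real.coe_toNNReal _ (pow_nonneg (le_of_lt hr) _)]

section Homogeneous

variable {E : Type*} [NormedAddCommGroup E] [NormedSpace ℝ E] [FiniteDimensional ℝ E]

theorem exists_norm_le_mul_rpow_of_homogeneous {F : Type*} [NormedAddCommGroup F] {f : E → F}
    {d : ℝ} (hf : ContinuousOn f {0}ᶜ)
    (hhom : ∀ r : ℝ, 0 < r → ∀ ξ : E, ξ ≠ 0 → ‖f (r • ξ)‖ = r ^ d * ‖f ξ‖) :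
    ∃ A ≥ 0, ∀ ξ : E, ξ ≠ 0 → ‖f ξ‖ ≤ A * ‖ξ‖ ^ d := by
  have hsphere : sphere (0 : E) 1 ⊆ {0}ᶜ := fun ω hω ↦ ne_of_mem_sphere hω one_ne_zero
  obtain ⟨A, hA⟩ := (isCompact_sphere (0 : E) 1).exists_bound_of_continuousOn (hf.mono hsphere)
  refine ⟨max A 0, le_max_right _ _, fun ξ hξ ↦ ?_⟩
  have hξpos : 0 < ‖ξ‖ := norm_pos_iff.mpr hξ
  have hω : ‖ξ‖⁻¹ • ξ ∈ sphere (0 : E) 1 := by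
    simp [norm_smul, inv_mul_cancel₀ hξpos.ne']
  calc ‖f ξ‖ = ‖ξ‖ ^ d * ‖f (‖ξ‖⁻¹ • ξ)‖ := by
        rw [← hhom _ hξpos _ (hsphere hω), smul_inv_smul₀ hξpos.ne']
    _ ≤ ‖ξ‖ ^ d * max A 0 := by
        gcongr
        exact (hA _ hω).trans (le_max_left _ _)
    _ = max A 0 * ‖ξ‖ ^ d := mul_comm _ _

theorem exists_pos_forall_comp_mul_eq_zero_of_norm_lt_one {G : Type*} [Zero G] {ℓ : E → ℝ}
    {m : ℝ} (hm : 0 < m) (hℓc : ContinuousOn ℓ {0}ᶜ)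
    (hℓ : ∀ r : ℝ, 0 < r → ∀ ξ : E, ξ ≠ 0 → ℓ (r • ξ) = r ^ m * ℓ ξ) {g : ℝ → G} {K : Set ℝ}
    (hK : IsCompact K) (hKpos : K ⊆ Ioi 0) (hg : ∀ u ∉ K, g u = 0) :
    ∃ t₀ > 0, ∀ t : ℝ, 0 < t → t < t₀ → ∀ ξ : E, ξ ≠ 0 → ‖ξ‖ < 1 → g (t * ℓ ξ) = 0 := by
  obtain ⟨δ, hδ, hδK⟩ := hK.exists_pos_le_of_subset_Ioi hKpos
  obtain ⟨C, hC, hℓC⟩ := exists_norm_le_mul_rpow_of_homogeneous hℓc fun r hr ξ hξ ↦ by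
    rw [hℓ r hr ξ hξ, norm_mul, Real.norm_of_nonneg (by positivity)]
  refine ⟨δ / (C + 1), by positivity, fun t ht htt ξ hξ hξ1 ↦
    hg _ fun hmem ↦ (hδK _ hmem).not_gt ?_⟩
  calc t * ℓ ξ ≤ t * (C * ‖ξ‖ ^ m) := by
        gcongr
        exact (le_abs_self _).trans (hℓC ξ hξ)
    _ ≤ t * (C + 1) := by
        gcongr
        nlinarith [Real.rpow_le_one (norm_nonneg ξ) hξ1.le hm.le]
    _ < δ := (lt_div_iff₀ (by positivity)).mp htt

variable [MeasurableSpace E] [BorelSpace E] [Nontrivial E]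

theorem MeasureTheory.integral_eq_integral_toSphere_integral_Ioi {F : Type*}
    [NormedAddCommGroup F] [NormedSpace ℝ F] (μ : Measure E) [μ.IsAddHaarMeasure] {f : E → F}
    (hf : Integrable f μ) :
    ∫ x, f x ∂μ = ∫ ω, (∫ r in Ioi (0 : ℝ),
      r ^ (Module.finrank ℝ E - 1) • f (r • (ω : E))) ∂μ.toSphere := by
  have hmp := μ.measurePreserving_homeomorphUnitSphereProd
  have hpolar : ∀ x : ({0}ᶜ : Set E),
      f ((homeomorphUnitSphereProd E x).2.1 • ((homeomorphUnitSphereProd E x).1 : E)) = f x :=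
    fun x ↦ by simp [smul_inv_smul₀ (norm_ne_zero_iff.mpr x.2)]
  have hint : Integrable (fun p : sphere (0 : E) 1 × Ioi (0 : ℝ) ↦ f (p.2.1 • (p.1 : E)))
      (μ.toSphere.prod (Measure.volumeIoiPow (Module.finrank ℝ E - 1))) := by
    rw [← hmp.integrable_comp_emb (Homeomorph.measurableEmbedding _)]
    simp only [Function.comp_def, hpolar]
    exact (integrableOn_iff_comap_subtypeVal (measurableSet_singleton _).compl).mp hf.integrableOn
  calc ∫ x, f x ∂μ = ∫ x : ({0}ᶜ : Set E), f x ∂μ.comap (↑) := by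
        rw [integral_subtype_comap (measurableSet_singleton _).compl, restrict_compl_singleton]
    _ = ∫ p, f (p.2.1 • (p.1 : E))
          ∂μ.toSphere.prod (Measure.volumeIoiPow (Module.finrank ℝ E - 1)) := by
        rw [← hmp.integral_comp (Homeomorph.measurableEmbedding _)]
        simp only [hpolar]
    _ = _ := by
        rw [integral_prod _ hint]
        congr 1 with ω
        exact Measure.integral_volumeIoiPow _ fun r ↦ f (r • (ω : E))

theorem MeasureTheory.integral_mul_comp_of_homogeneous (μ : Measure E) [μ.IsAddHaarMeasure]
    {a : E → ℂ} {ℓ : E → ℝ} {m : ℝ} (g : ℝ → ℂ)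
    (ha : ∀ r : ℝ, 0 < r → ∀ ξ : E, ξ ≠ 0 →
      a (r • ξ) = ((r ^ (-(Module.finrank ℝ E : ℝ)) : ℝ) : ℂ) * a ξ)
    (hℓ : ∀ r : ℝ, 0 < r → ∀ ξ : E, ξ ≠ 0 → ℓ (r • ξ) = r ^ m * ℓ ξ)
    (hℓpos : ∀ ω ∈ sphere (0 : E) 1, 0 < ℓ ω) (hint : Integrable (fun ξ ↦ a ξ * g (ℓ ξ)) μ) :
    ∫ ξ, a ξ * g (ℓ ξ) ∂μ = (∫ ω, a ω ∂μ.toSphere) * (|m|⁻¹ • mellin g 0) := by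
  rw [integral_eq_integral_toSphere_integral_Ioi μ hint, ← integral_mul_const]
  congr 1 with ω
  have hω : (ω : E) ≠ 0 := ne_of_mem_sphere ω.2 one_ne_zero
  rw [← mellin_comp_mul_rpow_zero g (hℓpos ω ω.2), mellin, ← integral_const_mul]
  refine setIntegral_congr_fun measurableSet_Ioi fun r (hr : 0 < r) ↦ ?_
  have hweight : (r : ℂ) ^ ((0 : ℂ) - 1)
      = ((r ^ (Module.finrank ℝ E - 1) * r ^ (-(Module.finrank ℝ E : ℝ)) : ℝ) : ℂ) := by
    rw [pow_pred_mul_rpow_neg_natCast hr Module.finrank_pos, zero_sub, Complex.cpow_neg_one,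
      Complex.ofReal_inv]
  rw [ha r hr _ hω, hℓ r hr _ hω, hweight, Complex.real_smul, smul_eq_mul, mul_comm (r ^ m)]
  push_cast
  ring

theorem MeasureTheory.integrable_mul_comp_of_homogeneous (μ : Measure E) [μ.IsAddHaarMeasure]
    {a : E → ℂ} {ℓ : E → ℝ} {g : ℝ → ℂ} {d m c M R : ℝ} (hac : ContinuousOn a {0}ᶜ)
    (ha : ∀ r : ℝ, 0 < r → ∀ ξ : E, ξ ≠ 0 → a (r • ξ) = ((r ^ d : ℝ) : ℂ) * a ξ) (hd : d ≤ 0)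
    (hℓc : ContinuousOn ℓ {0}ᶜ) (hm : 0 < m) (hc : 0 < c)
    (hℓ : ∀ ξ : E, ξ ≠ 0 → c * ‖ξ‖ ^ m ≤ ℓ ξ) (hgm : Measurable g) (hgM : ∀ u, ‖g u‖ ≤ M)
    (hgR : ∀ u, g u ≠ 0 → u ≤ R) (hg1 : ∀ ξ : E, ξ ≠ 0 → ‖ξ‖ < 1 → g (ℓ ξ) = 0) :
    Integrable (fun ξ ↦ a ξ * g (ℓ ξ)) μ := by
  obtain ⟨A, hA, haA⟩ := exists_norm_le_mul_rpow_of_homogeneous hac fun r hr ξ hξ ↦ by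
    rw [ha r hr ξ hξ, norm_mul, Complex.norm_real, Real.norm_of_nonneg (by positivity)]
  obtain ⟨B, hB⟩ := exists_norm_le_of_mul_rpow_norm_le hm hc hℓ R
  have hmeas : AEStronglyMeasurable (fun ξ ↦ a ξ * g (ℓ ξ)) μ := by
    rw [← restrict_compl_singleton (μ := μ) 0]
    have h0 : MeasurableSet ({0}ᶜ : Set E) := (measurableSet_singleton 0).compl
    exact (hac.aestronglyMeasurable h0).mul
      (hgm.comp_aemeasurable (hℓc.aemeasurable h0)).aestronglyMeasurable
  have hbound : ∀ᵐ ξ ∂μ, ‖a ξ * g (ℓ ξ)‖ ≤ A * M := by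
    filter_upwards [Measure.ae_ne μ 0] with ξ hξ
    have hM : 0 ≤ M := (norm_nonneg _).trans (hgM 0)
    rcases lt_or_ge ‖ξ‖ 1 with hξ1 | hξ1
    · rw [hg1 ξ hξ hξ1, mul_zero, norm_zero]
      positivity
    rw [norm_mul]
    gcongr
    · calc ‖a ξ‖ ≤ A * ‖ξ‖ ^ d := haA ξ hξ
        _ ≤ A * 1 := by
          gcongr
          exact Real.rpow_le_one_of_one_le_of_nonpos hξ1 hd
        _ = A := mul_one A
    · exact hgM _
  exact integrable_of_ae_norm_le_of_support_bounded μ hmeas hbound fun ξ hξ ↦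
    hB ξ (hgR _ (right_ne_zero_of_mul hξ))

end Homogeneous

/-- for `a` homogeneous of degree `-n`, `ℓ` homogeneous elliptic of degree
`m₀`, and `η` bounded with compact support in `(0,∞)`, for all sufficiently small `t > 0`,
`∫_{|ξ|≥1} a(ξ) η(t ℓ(ξ)) dξ = (1/m₀)(∫_{𝕊^{n-1}} a dς)(∫_0^∞ η(u) du/u)`. -/
theorem stmt17 {n : ℕ} (hn : 2 ≤ n) (m₀ c₀ : ℝ) (hm₀ : 0 < m₀) (hc₀ : 0 < c₀)
    (ℓ : EuclideanSpace ℝ (Fin n) → ℝ) (hℓc : ContinuousOn ℓ {0}ᶜ)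
    (hℓhom : ∀ r : ℝ, 0 < r → ∀ ξ : EuclideanSpace ℝ (Fin n), ξ ≠ 0 →
      ℓ (r • ξ) = r ^ m₀ * ℓ ξ)
    (hell : ∀ ξ : EuclideanSpace ℝ (Fin n), ξ ≠ 0 → c₀ * ‖ξ‖ ^ m₀ ≤ ℓ ξ)
    (a : EuclideanSpace ℝ (Fin n) → ℂ) (hac : ContinuousOn a {0}ᶜ)
    (hahom : ∀ r : ℝ, 0 < r → ∀ ξ : EuclideanSpace ℝ (Fin n), ξ ≠ 0 →
      a (r • ξ) = ((r ^ (-(n : ℝ)) : ℝ) : ℂ) * a ξ)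
    (η : ℝ → ℂ) (hηm : Measurable η) (M : ℝ) (hηb : ∀ u, ‖η u‖ ≤ M)
    (K : Set ℝ) (hK : IsCompact K) (hKpos : K ⊆ Set.Ioi 0)
    (hηsupp : ∀ u ∉ K, η u = 0) :
    ∃ t₀ > (0 : ℝ), ∀ t : ℝ, 0 < t → t < t₀ →
      ∫ ξ in {ξ : EuclideanSpace ℝ (Fin n) | 1 ≤ ‖ξ‖}, a ξ * η (t * ℓ ξ)
        = (1 / m₀ : ℂ)
          * (∫ ω, a (ω : EuclideanSpace ℝ (Fin n))
              ∂((volume : Measure (EuclideanSpace ℝ (Fin n))).toSphere))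
          * ∫ u in Set.Ioi (0 : ℝ), η u * (u : ℂ)⁻¹ := by
  have : Nonempty (Fin n) := ⟨⟨0, by omega⟩⟩
  obtain ⟨t₀, ht₀, hvanish⟩ :=
    exists_pos_forall_comp_mul_eq_zero_of_norm_lt_one hm₀ hℓc hℓhom hK hKpos hηsupp
  obtain ⟨R, hR⟩ := hK.bddAbove
  refine ⟨t₀, ht₀, fun t ht htt ↦ ?_⟩
  have hℓpos : ∀ ω ∈ sphere (0 : EuclideanSpace ℝ (Fin n)) 1, 0 < ℓ ω := fun ω hω ↦
    hc₀.trans_le <| by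
      simpa [mem_sphere_zero_iff_norm.mp hω] using hell ω (ne_of_mem_sphere hω one_ne_zero)
  have hsupp : ∀ u, η (t * u) ≠ 0 → u ≤ R / t := fun u hu ↦
    (le_div_iff₀' ht).mpr <| hR <| by_contra (hu ∘ hηsupp _)
  have hint : Integrable (fun ξ ↦ a ξ * η (t * ℓ ξ)) :=
    integrable_mul_comp_of_homogeneous volume (g := fun u ↦ η (t * u)) hac hahom (by simp) hℓc
      hm₀ hc₀ hell (hηm.comp (measurable_const_mul t)) (fun _ ↦ hηb _) hsupp (hvanish t ht htt)
  have hoff : ∀ᵐ ξ, ξ ∉ {ξ : EuclideanSpace ℝ (Fin n) | 1 ≤ ‖ξ‖} → a ξ * η (t * ℓ ξ) = 0 := by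
    filter_upwards [Measure.ae_ne volume 0] with ξ hξ hξ1
    rw [hvanish t ht htt ξ hξ (not_le.mp hξ1), mul_zero]
  rw [setIntegral_eq_integral_of_ae_compl_eq_zero hoff,
    integral_mul_comp_of_homogeneous volume (fun u ↦ η (t * u))
      (finrank_euclideanSpace_fin (𝕜 := ℝ) ▸ hahom) hℓhom hℓpos hint,
    mellin_comp_mul_left _ _ ht, neg_zero, Complex.cpow_zero, one_smul,
    mellin_zero_eq_integral_inv_smul, abs_of_pos hm₀, Complex.real_smul]
  simp_rw [smul_eq_mul, mul_comm (_ : ℂ)⁻¹]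
  push_cast
  ring
end
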